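/- arXiv:2102.04707 — 2 statements merged into one kernel-verified Lean document; each statement's English description precedes it below -/
import Mathlib

section
/- The destroy-neighborhood is a true destroy neighborhood: for all integers i,d,k, every incidence graph G in 𝒞_d, every (i,d,k)-obstruction-tree T of G, and every variable x of G with x ∉ N†_G(T), T remains an (i,d,k)-obstruction-tree in at least one of G[x_+] and G[x_−]. -/
/-- Variables are natural numbers. -/
abbrev Var := ℕ

/-- A CNF formula: a finite set of clause identifiers, each identifier `i`
carrying the set of variables occurring positively (`pos i`) and negatively (`neg i`). -/
structure CNF where
  ids : Finset ℕ
  pos : ℕ → Finset Var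
  neg : ℕ → Finset Var

namespace CNF

/-- The variables of clause `i`. -/
def cvars (φ : CNF) (i : ℕ) : Finset Var := φ.pos i ∪ φ.neg i

/-- The variables of the formula. -/
def vars (φ : CNF) : Finset Var := φ.ids.biUnion φ.cvars

/-- The length of the formula: the sum of clause widths. -/
def len (φ : CNF) : ℕ := ∑ i ∈ φ.ids, (φ.cvars i).card

/-- `φ ∈ 𝒞_d`: every clause has at most `d` variables. -/
def InC (φ : CNF) (d : ℕ) : Prop := ∀ i ∈ φ.ids, (φ.cvars i).card ≤ d

/-- Assigning variable `x` to Boolean value `b`: clauses satisfied by the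
assignment are removed, and `x` is removed from the remaining clauses. -/
def assign (φ : CNF) (x : Var) (b : Bool) : CNF where
  ids := φ.ids.filter fun i => x ∉ (if b then φ.pos i else φ.neg i)
  pos := fun i => (φ.pos i).erase x
  neg := fun i => (φ.neg i).erase x

/-- Assigning all variables of a set `D` according to `τ`. -/
def assignSet (φ : CNF) (D : Finset Var) (τ : Var → Bool) : CNF where
  ids := φ.ids.filter fun i => ¬ ∃ x ∈ D, if τ x then x ∈ φ.pos i else x ∈ φ.neg i
  pos := fun i => φ.pos i \ D
  neg := fun i => φ.neg i \ D

/-- `τ` satisfies every clause of `φ`. -/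
def satBy (φ : CNF) (τ : Var → Bool) : Prop :=
  ∀ i ∈ φ.ids, (∃ x ∈ φ.pos i, τ x = true) ∨ (∃ x ∈ φ.neg i, τ x = false)

/-- `φ` is satisfiable. -/
def sat (φ : CNF) : Prop := ∃ τ, φ.satBy τ

/-- The number of satisfying assignments of `φ` over its variables
(assignments are normalized to be `false` outside `vars φ`). -/
noncomputable def count (φ : CNF) : ℕ :=
  Nat.card {τ : Var → Bool // φ.satBy τ ∧ ∀ x ∉ φ.vars, τ x = false}

/-- The incidence graph of `φ`: variable vertices `Sum.inl x` and clause
vertices `Sum.inr i`, adjacent iff `x` occurs in clause `i` of `φ`. -/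
def incGraph (φ : CNF) : SimpleGraph (Var ⊕ ℕ) where
  Adj u v := match u, v with
    | Sum.inl x, Sum.inr i => i ∈ φ.ids ∧ x ∈ φ.cvars i
    | Sum.inr i, Sum.inl x => i ∈ φ.ids ∧ x ∈ φ.cvars i
    | _, _ => False
  symm := ⟨by rintro (x | i) (y | j) h <;> exact h⟩
  loopless := ⟨by rintro (x | i) h <;> exact h⟩

/-- The vertices of the incidence graph that belong to `φ`. -/
def vertexSet (φ : CNF) : Set (Var ⊕ ℕ) :=
  {v | match v with | Sum.inl x => x ∈ φ.vars | Sum.inr i => i ∈ φ.ids}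

/-- The incidence graph of `φ` is connected. -/
def Conn (φ : CNF) : Prop :=
  ∀ u ∈ φ.vertexSet, ∀ v ∈ φ.vertexSet, (incGraph φ).Reachable u v

/-- The connected component (as a subformula) of clause `i` of `φ`. -/
noncomputable def componentOf (φ : CNF) (i : ℕ) : CNF := by
  classical
  exact { ids := φ.ids.filter fun j => (incGraph φ).Reachable (Sum.inr i) (Sum.inr j),
          pos := φ.pos, neg := φ.neg }

/-- The connected components of `φ`, as subformulas. -/
noncomputable def components (φ : CNF) : Finset CNF := by
  classical
  exact φ.ids.image φ.componentOf

/-- `ψ` is a connected component of `φ`. -/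
def IsComponent (φ ψ : CNF) : Prop := ψ ∈ φ.components

end CNF

/-- `SrbdLE φ k`: the strong recursive backdoor depth of `φ` to `𝒞₀` is at most `k`.
Either `φ` is edgeless, or we may assign one variable both ways at cost one,
or we may split into connected components for free. -/
inductive SrbdLE : CNF → ℕ → Prop where
| base (φ : CNF) (k : ℕ) : φ.vars = ∅ → SrbdLE φ k
| assign (φ : CNF) (k : ℕ) (x : Var) : x ∈ φ.vars →
    SrbdLE (φ.assign x true) k → SrbdLE (φ.assign x false) k → SrbdLE φ (k+1)
| split (φ : CNF) (k : ℕ) : (∀ ψ ∈ φ.components, SrbdLE ψ k) → SrbdLE φ k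

/-- `WrbdLE φ k`: the weak recursive backdoor depth of `φ` to `𝒞₀` is at most `k`. -/
inductive WrbdLE : CNF → ℕ → Prop where
| base (φ : CNF) (k : ℕ) : φ.vars = ∅ → φ.sat → WrbdLE φ k
| assign (φ : CNF) (k : ℕ) (x : Var) (b : Bool) : x ∈ φ.vars →
    WrbdLE (φ.assign x b) k → WrbdLE φ (k+1)
| split (φ : CNF) (k : ℕ) : (∀ ψ ∈ φ.components, WrbdLE ψ k) → WrbdLE φ k

/-- A strong recursive backdoor tree of `φ` to the class `C`:
leaves are formulas in `C`; a variable node branches on both assignments of a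
variable of `φ`; a component node has one child per connected component. -/
inductive SRB (C : Set CNF) : CNF → Type where
| leaf : (φ : CNF) → φ ∈ C → SRB C φ
| varNode : (φ : CNF) → (x : Var) → x ∈ φ.vars →
    SRB C (φ.assign x true) → SRB C (φ.assign x false) → SRB C φ
| compNode : (φ : CNF) → ((ψ : CNF) → ψ ∈ φ.components → SRB C ψ) → SRB C φ

namespace SRB

variable {C : Set CNF}

/-- The depth of a strong recursive backdoor: the maximal number of variable
nodes on a root-to-leaf path. -/
noncomputable def depth : {φ : CNF} → SRB C φ → ℕ
| _, .leaf _ _ => 0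
| _, .varNode _ _ _ l r => 1 + max (depth l) (depth r)
| _, .compNode φ f => φ.components.attach.sup fun ψ => depth (f ψ.1 ψ.2)

/-- The number of leaf nodes of a strong recursive backdoor. -/
noncomputable def leaves : {φ : CNF} → SRB C φ → ℕ
| _, .leaf _ _ => 1
| _, .varNode _ _ _ l r => leaves l + leaves r
| _, .compNode φ f => ∑ ψ ∈ φ.components.attach, leaves (f ψ.1 ψ.2)

/-- Bottom-up satisfiability evaluation of a strong recursive backdoor:
a leaf evaluates to the satisfiability of its formula, a variable node to the
disjunction of its children, a component node to the conjunction of its children. -/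
def eval : {φ : CNF} → SRB C φ → Prop
| _, .leaf φ _ => φ.sat
| _, .varNode _ _ _ l r => eval l ∨ eval r
| _, .compNode φ f => ∀ (ψ : CNF) (h : ψ ∈ φ.components), eval (f ψ h)

/-- Bottom-up model counting: a leaf contributes its model count, a variable
node the sum over both polarities (corrected by factors `2^e` for variables
disappearing from all clauses), a component node the product over components. -/
noncomputable def countEval : {φ : CNF} → SRB C φ → ℕ
| _, .leaf φ _ => φ.count
| _, .varNode φ x _ l r =>
    2 ^ (((φ.vars.erase x) \ (φ.assign x true).vars).card) * countEval l
  + 2 ^ (((φ.vars.erase x) \ (φ.assign x false).vars).card) * countEval r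
| _, .compNode φ f => ∏ ψ ∈ φ.components.attach, countEval (f ψ.1 ψ.2)

end SRB

/-- The underlying data of an obstruction-tree: a base clause, or two
obstruction-trees joined by a path (a list of incidence-graph vertices). -/
inductive ObsTree : Type where
| base : ℕ → ObsTree
| node : ObsTree → ObsTree → List (Var ⊕ ℕ) → ObsTree

namespace ObsTree

/-- The elements `V(T)` of an obstruction-tree, relative to formula `φ`. -/
def elts (φ : CNF) : ObsTree → Finset (Var ⊕ ℕ)
| .base i => insert (Sum.inr i) ((φ.cvars i).image Sum.inl)
| .node T₁ T₂ P => elts φ T₁ ∪ elts φ T₂ ∪ P.toFinset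

/-- The variables `var(T)` among the elements of `T`. -/
def varSet (φ : CNF) (T : ObsTree) : Finset Var :=
  (T.elts φ).biUnion fun v => match v with | Sum.inl x => {x} | Sum.inr _ => ∅

/-- The clauses `cla(T)` among the elements of `T`. -/
def claSet (φ : CNF) (T : ObsTree) : Finset ℕ :=
  (T.elts φ).biUnion fun v => match v with | Sum.inl _ => ∅ | Sum.inr i => {i}

/-- The destroy-neighborhood `N†_φ(T)`. -/
def nd (φ : CNF) : ObsTree → Finset Var
| .base i => φ.cvars i
| .node T₁ T₂ P =>
    (ObsTree.node T₁ T₂ P).varSet φ ∪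
    (((ObsTree.node T₁ T₂ P).claSet φ).biUnion φ.pos ∩
      ((ObsTree.node T₁ T₂ P).claSet φ).biUnion φ.neg)

end ObsTree

/-- `IsObsTree φ d k i T`: `T` is an `(i,d,k)`-obstruction-tree of `φ`.
A clause of width exactly `d` (with its variables) is a `(d,d,k)`-obstruction-tree;
two `(i,d,k)`-obstruction-trees with disjoint destroy-neighborhoods joined by a
path of length at most `λ_k = 4·2^k` form an `(i+1,d,k)`-obstruction-tree. -/
inductive IsObsTree (φ : CNF) (d k : ℕ) : ℕ → ObsTree → Prop where
| base (i : ℕ) : i ∈ φ.ids → (φ.cvars i).card = d → IsObsTree φ d k d (.base i)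
| node (i : ℕ) (T₁ T₂ : ObsTree) (P : List (Var ⊕ ℕ)) :
    IsObsTree φ d k i T₁ → IsObsTree φ d k i T₂ →
    Disjoint (T₁.nd φ) (T₂.nd φ) →
    P.Chain' (CNF.incGraph φ).Adj → P.Nodup →
    (hne : P ≠ []) →
    P.head hne ∈ T₁.elts φ → P.getLast hne ∈ T₂.elts φ →
    P.length ≤ 4 * 2 ^ k + 1 →
    IsObsTree φ d k (i+1) (.node T₁ T₂ P)

/-! If `x ∉ N†_φ(T)`, then `x` is not a vertex of `T`, and `x` occurs in the clauses of `T`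
with at most one polarity. Giving `x` the value `b` that falsifies that polarity deletes
neither a vertex nor a clause of `T`; erasing `x` from the surviving clauses keeps every edge
between vertices of `T` and can only shrink destroy-neighborhoods, so every condition in the
inductive definition of an obstruction-tree survives the assignment. -/

namespace CNF

def Survives (φ : CNF) (x : Var) (b : Bool) : Var ⊕ ℕ → Prop
  | .inl y => y ≠ x
  | .inr j => x ∉ if b then φ.pos j else φ.neg j

variable {φ : CNF} {x : Var} {b : Bool}

lemma mem_assign_ids {j : ℕ} (hj : j ∈ φ.ids) (hs : φ.Survives x b (.inr j)) :
    j ∈ (φ.assign x b).ids :=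
  Finset.mem_filter.2 ⟨hj, hs⟩

lemma cvars_assign_of_notMem {j : ℕ} (h : x ∉ φ.cvars j) :
    (φ.assign x b).cvars j = φ.cvars j := by
  rw [cvars, Finset.mem_union, not_or] at h
  simp only [cvars, assign, Finset.erase_eq_of_notMem h.1, Finset.erase_eq_of_notMem h.2]

lemma mem_cvars_assign {j : ℕ} {y : Var} (hy : y ∈ φ.cvars j) (hyx : y ≠ x) :
    y ∈ (φ.assign x b).cvars j := by
  simp only [cvars, assign, Finset.mem_union, Finset.mem_erase] at hy ⊢
  tauto

lemma incGraph_assign_adj {u v : Var ⊕ ℕ} (h : (incGraph φ).Adj u v)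
    (hu : φ.Survives x b u) (hv : φ.Survives x b v) : (incGraph (φ.assign x b)).Adj u v := by
  match u, v, h with
  | .inl _, .inr _, ⟨hj, hy⟩ => exact ⟨mem_assign_ids hj hv, mem_cvars_assign hy hu⟩
  | .inr _, .inl _, ⟨hj, hy⟩ => exact ⟨mem_assign_ids hj hu, mem_cvars_assign hy hv⟩

end CNF

namespace ObsTree

variable {φ : CNF} {x : Var} {b : Bool}

lemma mem_varSet {T : ObsTree} : x ∈ T.varSet φ ↔ Sum.inl x ∈ T.elts φ := by
  simp only [varSet, Finset.mem_biUnion]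
  constructor
  · rintro ⟨_ | _, hv, hx⟩
    · rwa [Finset.mem_singleton.1 hx]
    · simp at hx
  · exact fun h => ⟨_, h, Finset.mem_singleton_self x⟩

lemma mem_claSet {T : ObsTree} {j : ℕ} : j ∈ T.claSet φ ↔ Sum.inr j ∈ T.elts φ := by
  simp only [claSet, Finset.mem_biUnion]
  constructor
  · rintro ⟨_ | _, hv, hj⟩
    · simp at hj
    · rwa [Finset.mem_singleton.1 hj]
  · exact fun h => ⟨_, h, Finset.mem_singleton_self j⟩

lemma varSet_subset_nd : ∀ T : ObsTree, T.varSet φ ⊆ T.nd φ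
  | .base i => fun y hy => by simpa [mem_varSet, elts, nd] using hy
  | .node _ _ _ => Finset.subset_union_left

lemma exists_survives_of_notMem_nd {T : ObsTree} (hnd : x ∉ T.nd φ) :
    ∃ b, ∀ v ∈ T.elts φ, φ.Survives x b v := by
  have hvar : ∀ b y, Sum.inl y ∈ T.elts φ → φ.Survives x b (.inl y) := fun _ y hy hyx =>
    hnd (varSet_subset_nd T (mem_varSet.2 (hyx ▸ hy)))
  have survives_iff (b : Bool) : (∀ v ∈ T.elts φ, φ.Survives x b v) ↔
      ∀ j ∈ T.claSet φ, x ∉ if b then φ.pos j else φ.neg j := by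
    refine ⟨fun h j hj => h _ (mem_claSet.1 hj), fun h => ?_⟩
    rintro (y | j) hv
    · exact hvar b y hv
    · exact h j (mem_claSet.2 hv)
  simp only [survives_iff]
  cases T with
  | base i =>
    refine ⟨true, fun j hj hx => hnd ?_⟩
    obtain rfl : j = i := by simpa [mem_claSet, elts] using hj
    exact Finset.mem_union_left _ hx
  | node T₁ T₂ P =>
    simp only [nd, Finset.mem_union, Finset.mem_inter, not_or, not_and_or] at hnd
    rcases hnd.2 with hpos | hneg
    · exact ⟨true, fun j hj hx => hpos (Finset.mem_biUnion.2 ⟨j, hj, hx⟩)⟩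
    · exact ⟨false, fun j hj hx => hneg (Finset.mem_biUnion.2 ⟨j, hj, hx⟩)⟩

lemma elts_assign : ∀ {T : ObsTree}, Sum.inl x ∉ T.elts φ →
    T.elts (φ.assign x b) = T.elts φ
  | .base i, h => by
    have hx : x ∉ φ.cvars i := fun hx => h (by simp [elts, hx])
    simp [elts, CNF.cvars_assign_of_notMem hx]
  | .node T₁ T₂ P, h => by
    simp only [elts, Finset.mem_union, not_or] at h
    simp [elts, elts_assign h.1.1, elts_assign h.1.2]

lemma nd_assign_subset : ∀ {T : ObsTree}, Sum.inl x ∉ T.elts φ →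
    T.nd (φ.assign x b) ⊆ T.nd φ
  | .base _, _ => Finset.union_subset_union (Finset.erase_subset _ _) (Finset.erase_subset _ _)
  | .node T₁ T₂ P, h => by
    simp only [nd, varSet, claSet, elts_assign h]
    exact Finset.union_subset_union le_rfl <| Finset.inter_subset_inter
      (Finset.biUnion_mono fun _ _ => Finset.erase_subset _ _)
      (Finset.biUnion_mono fun _ _ => Finset.erase_subset _ _)

end ObsTree

open ObsTree in
theorem IsObsTree.assign {φ : CNF} {d k i : ℕ} {T : ObsTree} {x : Var} {b : Bool}
    (hT : IsObsTree φ d k i T) (hs : ∀ v ∈ T.elts φ, φ.Survives x b v) :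
    IsObsTree (φ.assign x b) d k i T := by
  induction hT with
  | base j hj hcard =>
    have hx : x ∉ φ.cvars j := fun hx => hs (.inl x) (by simp [elts, hx]) rfl
    exact .base j (CNF.mem_assign_ids hj (hs _ (by simp [elts])))
      (by rwa [CNF.cvars_assign_of_notMem hx])
  | node m T₁ T₂ P _ _ hdisj hchain hnodup hne hhead hlast hlen ih₁ ih₂ =>
    have hs₁ : ∀ v ∈ T₁.elts φ, φ.Survives x b v := fun v hv => hs v (by simp [elts, hv])
    have hs₂ : ∀ v ∈ T₂.elts φ, φ.Survives x b v := fun v hv => hs v (by simp [elts, hv])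
    have hsP : ∀ v ∈ P, φ.Survives x b v := fun v hv => hs v (by simp [elts, hv])
    have hx₁ : Sum.inl x ∉ T₁.elts φ := fun h => hs₁ _ h rfl
    have hx₂ : Sum.inl x ∉ T₂.elts φ := fun h => hs₂ _ h rfl
    refine .node m T₁ T₂ P (ih₁ hs₁) (ih₂ hs₂)
      (hdisj.mono (nd_assign_subset hx₁) (nd_assign_subset hx₂))
      (hchain.imp_of_mem_imp fun u v hu hv huv =>
        CNF.incGraph_assign_adj huv (hsP u hu) (hsP v hv))
      hnodup hne ?_ ?_ hlen
    · rwa [elts_assign hx₁]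
    · rwa [elts_assign hx₂]

theorem nd_is_destroy_neighborhood_general (i d k : ℕ) (φ : CNF)
    (T : ObsTree) (hT : IsObsTree φ d k i T) (x : Var)
    (hnd : x ∉ T.nd φ) :
    IsObsTree (φ.assign x true) d k i T ∨ IsObsTree (φ.assign x false) d k i T := by
  obtain ⟨b, hb⟩ := ObsTree.exists_survives_of_notMem_nd hnd
  cases b
  · exact .inr (hT.assign hb)
  · exact .inl (hT.assign hb)

/-- the destroy-neighborhood is a destroy neighborhood:
for every variable `x ∉ N†_φ(T)`, `T` remains an `(i,d,k)`-obstruction-tree in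
at least one of `φ[x := true]` and `φ[x := false]`. -/
theorem nd_is_destroy_neighborhood (i d k : ℕ) (φ : CNF) (hφ : φ.InC d)
    (T : ObsTree) (hT : IsObsTree φ d k i T) (x : Var)
    (hx : x ∈ φ.vars) (hnd : x ∉ T.nd φ) :
    IsObsTree (φ.assign x true) d k i T ∨ IsObsTree (φ.assign x false) d k i T :=
  nd_is_destroy_neighborhood_general i d k φ T hT x hnd
end

section
/- Obstruction-trees can be lifted: for all integers i,d,k with d ≤ i and d ≤ k, every incidence graph G in 𝒞_d, every literal x_⋆ of G, and H := G[x_⋆], if T is an (i,d,k)-obstruction-tree of H, then T is also an (i,d,k)-obstruction-tree of G, and N†_G(T) = N†_H(T). -/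
/-! A clause of `φ[x := b]` of width `d` is a clause of `φ` of width at most `d` from which `x` was
erased, so for `φ ∈ 𝒞_d` nothing was erased: base trees of `φ[x := b]` are base trees of `φ` with
the same variables. Edges of `φ[x := b]` are edges of `φ`, so the joining paths lift as well, and all
clauses of a tree of `φ[x := b]` survive the assignment, so none of them contains the literal that
was set; hence `x` is never both positive and negative among them and the destroy-neighborhoods
agree. -/

theorem List.IsChain.exists_rel_of_ne_getLast {α : Type*} {r : α → α → Prop} :
    ∀ {P : List α}, P.IsChain r → ∀ (hne : P ≠ []) {a : α}, a ∈ P → a ≠ P.getLast hne →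
      ∃ w, r a w
  | [_], _, _, _, ha, hlast => absurd (List.mem_singleton.mp ha) hlast
  | a' :: b :: l, hP, _, a, ha, hlast => by
    rw [List.isChain_cons_cons] at hP
    rcases List.mem_cons.mp ha with rfl | ha
    · exact ⟨b, hP.1⟩
    · exact hP.2.exists_rel_of_ne_getLast (List.cons_ne_nil _ _) ha
        (by rwa [List.getLast_cons (List.cons_ne_nil _ _)] at hlast)

namespace CNF

variable {φ : CNF} {x : Var} {b : Bool}

theorem assign_ids_subset : (φ.assign x b).ids ⊆ φ.ids := Finset.filter_subset _ _

theorem cvars_assign (i : ℕ) : (φ.assign x b).cvars i = (φ.cvars i).erase x := by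
  simp [cvars, assign, Finset.erase_union_distrib]

theorem cvars_assign_eq_of_card {d i : ℕ} (hφ : φ.InC d) (hi : i ∈ (φ.assign x b).ids)
    (hcard : ((φ.assign x b).cvars i).card = d) : (φ.assign x b).cvars i = φ.cvars i :=
  Finset.eq_of_subset_of_card_le (by rw [cvars_assign]; exact Finset.erase_subset _ _)
    (hcard ▸ hφ i (assign_ids_subset hi))

theorem incGraph_assign_le : (φ.assign x b).incGraph ≤ φ.incGraph := by
  have lift : ∀ {j y}, j ∈ (φ.assign x b).ids ∧ y ∈ (φ.assign x b).cvars j →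
      j ∈ φ.ids ∧ y ∈ φ.cvars j := fun ⟨hj, hy⟩ =>
    ⟨assign_ids_subset hj, Finset.mem_of_mem_erase (cvars_assign _ ▸ hy)⟩
  rintro (_ | _) (_ | _) h
  exacts [h.elim, lift h, lift h, h.elim]

theorem mem_ids_of_adj_inr {j : ℕ} {w : Var ⊕ ℕ} (h : φ.incGraph.Adj (Sum.inr j) w) :
    j ∈ φ.ids := by
  cases w with
  | inl _ => exact h.1
  | inr _ => exact h.elim

theorem biUnion_pos_inter_biUnion_neg_assign {S : Finset ℕ} (hS : S ⊆ (φ.assign x b).ids) :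
    S.biUnion φ.pos ∩ S.biUnion φ.neg =
      S.biUnion (φ.assign x b).pos ∩ S.biUnion (φ.assign x b).neg := by
  have hx : ∀ j ∈ S, x ∉ (if b then φ.pos j else φ.neg j) := fun j hj =>
    (Finset.mem_filter.mp (hS hj)).2
  ext y
  simp only [Finset.mem_inter, Finset.mem_biUnion, assign, Finset.mem_erase]
  constructor
  · rintro ⟨⟨j₁, hj₁, hp⟩, ⟨j₂, hj₂, hn⟩⟩
    have hyx : y ≠ x := by
      rintro rfl
      cases b
      · exact hx j₂ hj₂ (by simpa using hn)
      · exact hx j₁ hj₁ (by simpa using hp)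
    exact ⟨⟨j₁, hj₁, hyx, hp⟩, ⟨j₂, hj₂, hyx, hn⟩⟩
  · rintro ⟨⟨j₁, hj₁, -, hp⟩, ⟨j₂, hj₂, -, hn⟩⟩
    exact ⟨⟨j₁, hj₁, hp⟩, ⟨j₂, hj₂, hn⟩⟩

end CNF

theorem ObsTree.mem_claSet_s10 {φ : CNF} {T : ObsTree} {j : ℕ} :
    j ∈ T.claSet φ ↔ Sum.inr j ∈ T.elts φ := by
  simp only [ObsTree.claSet, Finset.mem_biUnion]
  constructor
  · rintro ⟨(_ | m), hv, hj⟩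
    · simp at hj
    · rwa [Finset.mem_singleton.mp hj]
  · exact fun h => ⟨Sum.inr j, h, Finset.mem_singleton_self j⟩

namespace IsObsTree

variable {φ : CNF} {d k i : ℕ} {T : ObsTree}

theorem mem_ids_of_inr_mem_elts (hT : IsObsTree φ d k i T) {j : ℕ}
    (hj : Sum.inr j ∈ T.elts φ) : j ∈ φ.ids := by
  induction hT with
  | base m hm _ =>
    simp only [ObsTree.elts, Finset.mem_insert, Finset.mem_image, reduceCtorEq, and_false,
      exists_false, or_false, Sum.inr.injEq] at hj
    exact hj ▸ hm
  | node _ _ _ P _ _ _ hchain _ hne _ hlast _ ih₁ ih₂ =>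
    simp only [ObsTree.elts, Finset.mem_union, List.mem_toFinset] at hj
    rcases hj with (hj | hj) | hj
    · exact ih₁ hj
    · exact ih₂ hj
    · by_cases hend : Sum.inr j = P.getLast hne
      · exact ih₂ (hend ▸ hlast)
      · obtain ⟨w, hw⟩ := List.IsChain.exists_rel_of_ne_getLast hchain hne hj hend
        exact CNF.mem_ids_of_adj_inr hw

variable {x : Var} {b : Bool}

theorem elts_assign (hφ : φ.InC d) (hT : IsObsTree (φ.assign x b) d k i T) :
    T.elts φ = T.elts (φ.assign x b) := by
  induction hT with
  | base j hj hcard => simp only [ObsTree.elts, CNF.cvars_assign_eq_of_card hφ hj hcard]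
  | node _ _ _ _ _ _ _ _ _ _ _ _ _ ih₁ ih₂ => simp only [ObsTree.elts, ih₁, ih₂]

theorem nd_assign (hφ : φ.InC d) (hT : IsObsTree (φ.assign x b) d k i T) :
    T.nd φ = T.nd (φ.assign x b) := by
  cases id hT with
  | base j hj hcard => exact (CNF.cvars_assign_eq_of_card hφ hj hcard).symm
  | node _ T₁ T₂ P =>
    have hcla : (ObsTree.node T₁ T₂ P).claSet (φ.assign x b) ⊆ (φ.assign x b).ids :=
      fun _ hj => hT.mem_ids_of_inr_mem_elts (ObsTree.mem_claSet_s10.mp hj)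
    simp only [ObsTree.nd, ObsTree.varSet, ObsTree.claSet, hT.elts_assign hφ] at hcla ⊢
    rw [CNF.biUnion_pos_inter_biUnion_neg_assign hcla]

theorem of_assign (hφ : φ.InC d) (hT : IsObsTree (φ.assign x b) d k i T) :
    IsObsTree φ d k i T := by
  induction hT with
  | base j hj hcard =>
    exact .base j (CNF.assign_ids_subset hj) (CNF.cvars_assign_eq_of_card hφ hj hcard ▸ hcard)
  | node i' T₁ T₂ P h₁ h₂ hdisj hchain hnodup hne hhead hlast hlen ih₁ ih₂ =>
    refine .node i' T₁ T₂ P ih₁ ih₂ ?_ (hchain.imp fun _ _ h => CNF.incGraph_assign_le h)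
      hnodup hne (h₁.elts_assign hφ ▸ hhead) (h₂.elts_assign hφ ▸ hlast) hlen
    rwa [h₁.nd_assign hφ, h₂.nd_assign hφ]

end IsObsTree

theorem obsTree_lift_general (i d k : ℕ)
    (φ : CNF) (hφ : φ.InC d) (x : Var) (b : Bool)
    (T : ObsTree) (hT : IsObsTree (φ.assign x b) d k i T) :
    IsObsTree φ d k i T ∧ T.nd φ = T.nd (φ.assign x b) :=
  ⟨hT.of_assign hφ, hT.nd_assign hφ⟩

/-- obstruction-trees can be lifted: for `d ≤ i` and `d ≤ k`,
if `T` is an `(i,d,k)`-obstruction-tree of `H := φ[x := b]` for a literal of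
`φ ∈ 𝒞_d`, then `T` is also an `(i,d,k)`-obstruction-tree of `φ` with the same
destroy-neighborhood. -/
theorem obsTree_lift (i d k : ℕ) (hdi : d ≤ i) (hdk : d ≤ k)
    (φ : CNF) (hφ : φ.InC d) (x : Var) (b : Bool) (hx : x ∈ φ.vars)
    (T : ObsTree) (hT : IsObsTree (φ.assign x b) d k i T) :
    IsObsTree φ d k i T ∧ T.nd φ = T.nd (φ.assign x b) :=
  obsTree_lift_general i d k φ hφ x b T hT
end
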